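/- Let φ: P → Q be a surjective morphism of connected CDGAs with P a Poincaré duality CDGA in dimension n, Q of finite type, and let φ! := θ_P^{-1} ∘ (s^{-n}#φ) : s^{-n}#Q → P; assume φ∘φ! is balanced. Then: (1) φ! is injective; (2) I := φ!(s^{-n}#Q) is a differential ideal of P; and (3) the projection π = (proj, 0) : P ⊕_{φ!} ss^{-n}#Q → P/I is a quasi-isomorphism of CDGAs, where the mapping cone carries the semi-trivial CDGA structure. -/

import Mathlib

/-!
Common framework: commutative differential graded algebras (CDGAs) over `ℚ`,
differential graded modules, linear duals (represented via perfect pairings),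
mapping cones with their semi-trivial multiplication, Poincaré duality CDGAs,
orientations, orphans, and Sullivan extensions.

A CDGA over `ℚ` is presented as a (possibly non-commutative) ring `A` which is a
`ℚ`-algebra, together with an internal `ℕ`-grading by `ℚ`-subspaces for which
`A` is the internal direct sum of the pieces, such that the product is graded
(with graded commutativity `a·b = (-1)^{|a||b|} b·a`), and a degree `+1`
`ℚ`-linear differential squaring to zero and satisfying the Leibniz rule.
-/

noncomputable section

structure CDGAStruct (A : Type) [Ring A] [Algebra ℚ A] : Type where
  gr : ℕ → Submodule ℚ A
  internal : DirectSum.IsInternal gr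
  one_mem : (1 : A) ∈ gr 0
  mul_mem : ∀ {i j : ℕ} {a b : A}, a ∈ gr i → b ∈ gr j → a * b ∈ gr (i + j)
  gcomm : ∀ {i j : ℕ} {a b : A}, a ∈ gr i → b ∈ gr j →
    a * b = ((-1 : ℚ) ^ (i * j)) • (b * a)
  d : A →ₗ[ℚ] A
  d_mem : ∀ {i : ℕ} {a : A}, a ∈ gr i → d a ∈ gr (i + 1)
  d_sq : ∀ a : A, d (d a) = 0
  leibniz : ∀ {i : ℕ} (a b : A), a ∈ gr i →
    d (a * b) = d a * b + ((-1 : ℚ) ^ i) • (a * d b)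

namespace CDGAStruct

variable {A : Type} [Ring A] [Algebra ℚ A]

/-- The grading of a CDGA extended to `ℤ` (zero in negative degrees). -/
def grZ (SA : CDGAStruct A) : ℤ → Submodule ℚ A :=
  fun j => if 0 ≤ j then SA.gr j.toNat else ⊥

/-- A CDGA is connected if `A⁰ = ℚ·1 ≅ ℚ`. -/
def Connected (SA : CDGAStruct A) : Prop :=
  ∀ a ∈ SA.gr 0, ∃! q : ℚ, a = q • (1 : A)

/-- A CDGA is of finite type if each graded piece is finite dimensional. -/
def FiniteType (SA : CDGAStruct A) : Prop :=
  ∀ i : ℕ, FiniteDimensional ℚ (SA.gr i)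

end CDGAStruct

/-- A morphism of CDGAs: a `ℚ`-linear map which is unital, multiplicative,
preserves the gradings and commutes with the differentials. -/
def IsCDGAHom {A B : Type} [Ring A] [Algebra ℚ A] [Ring B] [Algebra ℚ B]
    (SA : CDGAStruct A) (SB : CDGAStruct B) (f : A →ₗ[ℚ] B) : Prop :=
  f 1 = 1 ∧ (∀ a a' : A, f (a * a') = f a * f a') ∧
    (∀ i : ℕ, ∀ a ∈ SA.gr i, f a ∈ SB.gr i) ∧ ∀ a, f (SA.d a) = SB.d (f a)

/-- A differential graded module (`ℤ`-graded) over the CDGA `(A, SA)`. -/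
structure DGModStruct {A : Type} [Ring A] [Algebra ℚ A] (SA : CDGAStruct A)
    (M : Type) [AddCommGroup M] [Module ℚ M] : Type where
  gr : ℤ → Submodule ℚ M
  internal : DirectSum.IsInternal gr
  smul : A →ₗ[ℚ] M →ₗ[ℚ] M
  one_smul : ∀ m : M, smul 1 m = m
  mul_smul : ∀ (a b : A) (m : M), smul (a * b) m = smul a (smul b m)
  smul_mem : ∀ {i : ℕ} {j : ℤ} {a : A} {m : M},
    a ∈ SA.gr i → m ∈ gr j → smul a m ∈ gr (i + j)
  d : M →ₗ[ℚ] M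
  d_mem : ∀ {j : ℤ} {m : M}, m ∈ gr j → d m ∈ gr (j + 1)
  d_sq : ∀ m : M, d (d m) = 0
  leibniz : ∀ {i : ℕ} (a : A) (m : M), a ∈ SA.gr i →
    d (smul a m) = smul (SA.d a) m + ((-1 : ℚ) ^ i) • smul a (d m)

/-- `SM` is the tautological dg-module structure of a CDGA over itself. -/
def IsSelfMod {A : Type} [Ring A] [Algebra ℚ A] (SA : CDGAStruct A)
    (SM : DGModStruct SA A) : Prop :=
  (∀ j : ℤ, SM.gr j = SA.grZ j) ∧ (∀ a b : A, SM.smul a b = a * b) ∧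
    ∀ a : A, SM.d a = SA.d a

/-- `SMA` is the `A`-dg-module structure induced from the `B`-dg-module
structure `SMB` by restriction along the CDGA morphism `φ : A → B`. -/
def IsModViaHom {A B : Type} [Ring A] [Algebra ℚ A] [Ring B] [Algebra ℚ B]
    (SA : CDGAStruct A) (SB : CDGAStruct B) (φ : A →ₗ[ℚ] B)
    {M : Type} [AddCommGroup M] [Module ℚ M]
    (SMB : DGModStruct SB M) (SMA : DGModStruct SA M) : Prop :=
  (∀ j : ℤ, SMA.gr j = SMB.gr j) ∧ (∀ (a : A) (m : M), SMA.smul a m = SMB.smul (φ a) m) ∧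
    ∀ m : M, SMA.d m = SMB.d m

/-- A (degree `0`) morphism of dg-modules over a fixed CDGA. -/
def IsDGModHom {A : Type} [Ring A] [Algebra ℚ A] {SA : CDGAStruct A}
    {M N : Type} [AddCommGroup M] [Module ℚ M] [AddCommGroup N] [Module ℚ N]
    (SM : DGModStruct SA M) (SN : DGModStruct SA N) (f : M →ₗ[ℚ] N) : Prop :=
  (∀ j : ℤ, ∀ m ∈ SM.gr j, f m ∈ SN.gr j) ∧
    (∀ (a : A) (m : M), f (SM.smul a m) = SN.smul a (f m)) ∧
    ∀ m : M, f (SM.d m) = SN.d (f m)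

/-- A (degree `0`) morphism of `A`-dg-modules with target the CDGA `A` itself. -/
def IsDGHomToAlg {A : Type} [Ring A] [Algebra ℚ A] (SA : CDGAStruct A)
    {M : Type} [AddCommGroup M] [Module ℚ M]
    (SM : DGModStruct SA M) (f : M →ₗ[ℚ] A) : Prop :=
  (∀ j : ℤ, ∀ m ∈ SM.gr j, f m ∈ SA.grZ j) ∧
    (∀ (a : A) (m : M), f (SM.smul a m) = a * f m) ∧
    ∀ m : M, f (SM.d m) = SA.d (f m)

/-- An `A`-dg-module morphism `f : M → A` is balanced when `f(x)·y = x·f(y)`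
for all `x, y ∈ M`; here `x·f(y) = (-1)^{|x||f(y)|} f(y)·x` by the usual Koszul
sign rule, and `|f(y)| = |y|` since `f` has degree `0`. -/
def IsBalanced {A : Type} [Ring A] [Algebra ℚ A] (SA : CDGAStruct A)
    {M : Type} [AddCommGroup M] [Module ℚ M]
    (SM : DGModStruct SA M) (f : M →ₗ[ℚ] A) : Prop :=
  ∀ (i j : ℤ) (x y : M), x ∈ SM.gr i → y ∈ SM.gr j →
    SM.smul (f x) y = ((-1 : ℚ) ^ (i * j)) • SM.smul (f y) x

/-- `SD` realizes the shifted linear dual `s^{-n}#M` of the `A`-dg-module `M`: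
the structure carries a pairing `⟨-,-⟩ : D ⊗ M → ℚ` which vanishes except
between degrees `p` and `n - p`, is perfect in each degree, and satisfies
`⟨d f, x⟩ = -(-1)^{|f|} ⟨f, d x⟩` and `⟨a·f, x⟩ = (-1)^{|a||f|} ⟨f, a·x⟩`
(the standard dual dg-module structure `(a·f)(x) = (-1)^{|a||f|} f(a·x)` with
the dual differential). -/
structure DualRep {A : Type} [Ring A] [Algebra ℚ A] (SA : CDGAStruct A)
    {M : Type} [AddCommGroup M] [Module ℚ M] (SM : DGModStruct SA M) (n : ℤ)
    {D : Type} [AddCommGroup D] [Module ℚ D] (SD : DGModStruct SA D) : Type where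
  pair : D →ₗ[ℚ] M →ₗ[ℚ] ℚ
  pair_deg : ∀ {p q : ℤ} {f : D} {x : M}, f ∈ SD.gr p → x ∈ SM.gr q →
    p + q ≠ n → pair f x = 0
  nondeg : ∀ {p : ℤ} (f : D), f ∈ SD.gr p → (∀ x ∈ SM.gr (n - p), pair f x = 0) → f = 0
  surj : ∀ (p : ℤ) (φ : M →ₗ[ℚ] ℚ), ∃ f ∈ SD.gr p, ∀ x ∈ SM.gr (n - p), pair f x = φ x
  d_pair : ∀ {p : ℤ} (f : D) (x : M), f ∈ SD.gr p →
    pair (SD.d f) x = -(((-1 : ℚ) ^ p) * pair f (SM.d x))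
  smul_pair : ∀ {i : ℕ} {p : ℤ} (a : A) (f : D) (x : M), a ∈ SA.gr i → f ∈ SD.gr p →
    pair (SD.smul a f) x = ((-1 : ℚ) ^ ((i : ℤ) * p)) * pair f (SM.smul a x)

/-- A bundled dg-module over the CDGA `(A, SA)`. -/
structure DGMod {A : Type} [Ring A] [Algebra ℚ A] (SA : CDGAStruct A) : Type 1 where
  carrier : Type
  [acg : AddCommGroup carrier]
  [mod : Module ℚ carrier]
  str : DGModStruct SA carrier

attribute [instance] DGMod.acg DGMod.mod

/-- `SA` is a Poincaré duality CDGA in dimension `n`: it is connected, of finite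
type, and there is an isomorphism of `A`-dg-modules `θ : A ≅ s^{-n}#A`. -/
def IsPDCDGA {A : Type} [Ring A] [Algebra ℚ A] (SA : CDGAStruct A) (n : ℤ) : Prop :=
  SA.Connected ∧ SA.FiniteType ∧
    ∃ SAm : DGModStruct SA A, IsSelfMod SA SAm ∧
      ∃ (DM : DGMod SA) (_ : DualRep SA SAm n DM.str) (θ : A →ₗ[ℚ] DM.carrier),
        IsDGModHom SAm DM.str θ ∧ Function.Bijective θ

section Cohomology

variable {M N : Type} [AddCommGroup M] [Module ℚ M] [AddCommGroup N] [Module ℚ N]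

def IsCocycle (gr : ℤ → Submodule ℚ M) (d : M →ₗ[ℚ] M) (j : ℤ) (x : M) : Prop :=
  x ∈ gr j ∧ d x = 0

def IsCoboundary (gr : ℤ → Submodule ℚ M) (d : M →ₗ[ℚ] M) (j : ℤ) (x : M) : Prop :=
  ∃ y ∈ gr (j - 1), d y = x

/-- `H^j` vanishes: every cocycle of degree `j` is a coboundary. -/
def CohVanishAt (gr : ℤ → Submodule ℚ M) (d : M →ₗ[ℚ] M) (j : ℤ) : Prop :=
  ∀ x, IsCocycle gr d j x → IsCoboundary gr d j x

/-- The chain map `f` induces an isomorphism `H^j(M) → H^j(N)` (surjectivity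
and injectivity on cohomology classes in degree `j`). -/
def CohomIsoAt (grM : ℤ → Submodule ℚ M) (dM : M →ₗ[ℚ] M)
    (grN : ℤ → Submodule ℚ N) (dN : N →ₗ[ℚ] N) (f : M →ₗ[ℚ] N) (j : ℤ) : Prop :=
  (∀ y, IsCocycle grN dN j y →
    ∃ x, IsCocycle grM dM j x ∧ IsCoboundary grN dN j (f x - y)) ∧
  ∀ x, IsCocycle grM dM j x → IsCoboundary grN dN j (f x) → IsCoboundary grM dM j x

def IsQuasiIsoGr (grM : ℤ → Submodule ℚ M) (dM : M →ₗ[ℚ] M)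
    (grN : ℤ → Submodule ℚ N) (dN : N →ₗ[ℚ] N) (f : M →ₗ[ℚ] N) : Prop :=
  ∀ j : ℤ, CohomIsoAt grM dM grN dN f j

/-- The degree-`j` cohomology of a graded cochain complex, as a `ℚ`-module. -/
abbrev cohomologyAt (gr : ℤ → Submodule ℚ M) (d : M →ₗ[ℚ] M) (j : ℤ) : Type :=
  ↥(gr j ⊓ LinearMap.ker d) ⧸
    Submodule.comap (gr j ⊓ LinearMap.ker d).subtype (LinearMap.range d)

end Cohomology

/-- A quasi-isomorphism of CDGAs (on underlying linear maps). -/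
def IsQuasiIsoCDGA {A B : Type} [Ring A] [Algebra ℚ A] [Ring B] [Algebra ℚ B]
    (SA : CDGAStruct A) (SB : CDGAStruct B) (f : A →ₗ[ℚ] B) : Prop :=
  IsQuasiIsoGr SA.grZ SA.d SB.grZ SB.d f

/-- `H(A)` is a Poincaré duality algebra in dimension `n`: `H⁰ = ℚ`,
`H^{>n} = 0`, `dim H^n = 1` and the multiplication pairing
`H^k ⊗ H^{n-k} → H^n ≅ ℚ` is non-degenerate (expressed elementwise via a
linear functional `ε` representing evaluation against the fundamental class). -/
def CohomologyPD {A : Type} [Ring A] [Algebra ℚ A] (SA : CDGAStruct A) (n : ℕ) : Prop :=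
  (∀ a ∈ SA.gr 0, SA.d a = 0 → ∃ q : ℚ, a = q • (1 : A)) ∧
  (∀ j : ℤ, (n : ℤ) < j → CohVanishAt SA.grZ SA.d j) ∧
  ∃ ε : A →ₗ[ℚ] ℚ,
    (∀ i : ℕ, i ≠ n → ∀ a ∈ SA.gr i, ε a = 0) ∧
    (∀ a : A, ε (SA.d a) = 0) ∧
    (∃ a ∈ SA.gr n, SA.d a = 0 ∧ ε a = 1) ∧
    (∀ a ∈ SA.gr n, SA.d a = 0 → ε a = 0 → IsCoboundary SA.grZ SA.d (n : ℤ) a) ∧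
    ∀ i : ℕ, i ≤ n → ∀ a ∈ SA.gr i, SA.d a = 0 →
      ¬ IsCoboundary SA.grZ SA.d (i : ℤ) a →
        ∃ b ∈ SA.gr (n - i), SA.d b = 0 ∧ ε (a * b) ≠ 0

/-- `H(A)` is `1`-connected: `H⁰(A) = ℚ` and `H¹(A) = 0`. -/
def CohOneConnected {A : Type} [Ring A] [Algebra ℚ A] (SA : CDGAStruct A) : Prop :=
  (∀ a ∈ SA.gr 0, SA.d a = 0 → ∃ q : ℚ, a = q • (1 : A)) ∧
  ∀ a ∈ SA.gr 1, SA.d a = 0 → ∃ b ∈ SA.gr 0, SA.d b = a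

section Cone

variable {A : Type} [Ring A] [Algebra ℚ A] {M : Type} [AddCommGroup M] [Module ℚ M]

/-- The grading of the mapping cone `C(f) = A ⊕ sM` of a dg-module morphism
`f : M → A`:  `C(f)^p = A^p ⊕ (sM)^p = A^p ⊕ M^{p+1}`. -/
def coneGr (SA : CDGAStruct A) (SM : DGModStruct SA M) : ℤ → Submodule ℚ (A × M) :=
  fun p => (SA.grZ p).prod (SM.gr (p + 1))

/-- The differential of the mapping cone `C(f) = A ⊕_f sM`:
`δ(a, sm) = (d a + f m, -s (d m))`. -/
def coneD (SA : CDGAStruct A) (SM : DGModStruct SA M) (f : M →ₗ[ℚ] A) :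
    A × M →ₗ[ℚ] A × M :=
  (SA.d ∘ₗ LinearMap.fst ℚ A M + f ∘ₗ LinearMap.snd ℚ A M).prod
    (-(SM.d ∘ₗ LinearMap.snd ℚ A M))

/-- The semi-trivial product on the mapping cone `A ⊕ sM`: it is the unique
graded-commutative product extending the product of `A` and the `A`-module
structure of `sM` (with the Koszul sign `a·(sm) = (-1)^{|a|} s(a·m)`), and with
`(sm)·(sm') = 0`. -/
def SemiTrivialMul (SA : CDGAStruct A) (SM : DGModStruct SA M)
    (μ : A × M →ₗ[ℚ] A × M →ₗ[ℚ] A × M) : Prop :=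
  (∀ a a' : A, μ (a, 0) (a', 0) = (a * a', 0)) ∧
  (∀ (i : ℕ) (a : A) (m : M), a ∈ SA.gr i →
    μ (a, 0) (0, m) = (0, ((-1 : ℚ) ^ i) • SM.smul a m)) ∧
  (∀ (i : ℕ) (j : ℤ) (a : A) (m : M), a ∈ SA.gr i → m ∈ SM.gr j →
    μ (0, m) (a, 0) = (0, ((-1 : ℚ) ^ (j * (i : ℤ))) • SM.smul a m)) ∧
  ∀ m m' : M, μ (0, m) (0, m') = 0

end Cone

/-- The data `(gr, 1, μ, d)` on `C` is a (`ℤ`-graded) CDGA: internal grading,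
unital associative graded-commutative product, degree `+1` differential
squaring to zero and satisfying the Leibniz rule. -/
def IsGCDGA {C : Type} [AddCommGroup C] [Module ℚ C]
    (gr : ℤ → Submodule ℚ C) (one : C) (μ : C →ₗ[ℚ] C →ₗ[ℚ] C) (d : C →ₗ[ℚ] C) : Prop :=
  DirectSum.IsInternal gr ∧
  one ∈ gr 0 ∧
  (∀ x, μ one x = x) ∧ (∀ x, μ x one = x) ∧
  (∀ x y z : C, μ (μ x y) z = μ x (μ y z)) ∧
  (∀ (i j : ℤ) (x y : C), x ∈ gr i → y ∈ gr j → μ x y ∈ gr (i + j)) ∧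
  (∀ (i j : ℤ) (x y : C), x ∈ gr i → y ∈ gr j → μ x y = ((-1 : ℚ) ^ (i * j)) • μ y x) ∧
  (∀ j : ℤ, ∀ x ∈ gr j, d x ∈ gr (j + 1)) ∧
  (∀ x, d (d x) = 0) ∧
  ∀ (i : ℤ) (x y : C), x ∈ gr i → d (μ x y) = μ (d x) y + ((-1 : ℚ) ^ i) • μ x (d y)

/-- A morphism of (`ℤ`-graded) differential graded algebras presented by
`(grading, unit, product, differential)` data. -/
def IsGradedDGAHom {C D : Type} [AddCommGroup C] [Module ℚ C] [AddCommGroup D] [Module ℚ D]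
    (grC : ℤ → Submodule ℚ C) (oneC : C) (μC : C →ₗ[ℚ] C →ₗ[ℚ] C) (dC : C →ₗ[ℚ] C)
    (grD : ℤ → Submodule ℚ D) (oneD : D) (μD : D →ₗ[ℚ] D →ₗ[ℚ] D) (dD : D →ₗ[ℚ] D)
    (g : C →ₗ[ℚ] D) : Prop :=
  g oneC = oneD ∧ (∀ x y : C, g (μC x y) = μD (g x) (g y)) ∧
    (∀ j : ℤ, ∀ x ∈ grC j, g x ∈ grD j) ∧ ∀ x, g (dC x) = dD (g x)

/-- An orientation in degree `n` of a CDGA: a chain map `ε : A → s^{-n}ℚ`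
(i.e., `ε` is supported in degree `n` and kills boundaries) which is surjective
in cohomology. -/
def IsOrientation {A : Type} [Ring A] [Algebra ℚ A] (SA : CDGAStruct A) (n : ℕ)
    (ε : A →ₗ[ℚ] ℚ) : Prop :=
  (∀ i : ℕ, i ≠ n → ∀ a ∈ SA.gr i, ε a = 0) ∧ (∀ a : A, ε (SA.d a) = 0) ∧
    ∃ a ∈ SA.gr n, SA.d a = 0 ∧ ε a ≠ 0

/-- The orphan ideal `O(A, ε) = {a ∈ A | ∀ b, ε(a·b) = 0}` of an oriented CDGA. -/
def orphans {A : Type} [Ring A] [Algebra ℚ A] (_SA : CDGAStruct A) (ε : A →ₗ[ℚ] ℚ) :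
    Submodule ℚ A where
  carrier := { a : A | ∀ b : A, ε (a * b) = 0 }
  add_mem' := by
    intro a a' ha ha'
    intro b
    rw [add_mul, map_add, ha b, ha' b, add_zero]
  zero_mem' := by
    intro b
    rw [zero_mul, map_zero]
  smul_mem' := by
    intro c a ha
    intro b
    rw [smul_mul_assoc, map_smul, ha b, smul_zero]

/-- The orphan ideal is acyclic: it has vanishing cohomology in all degrees. -/
def OrphansAcyclic {A : Type} [Ring A] [Algebra ℚ A] (SA : CDGAStruct A)
    (ε : A →ₗ[ℚ] ℚ) : Prop :=
  ∀ (j : ℕ) (x : A), x ∈ orphans SA ε → x ∈ SA.gr j → SA.d x = 0 →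
    ∃ y ∈ orphans SA ε, y ∈ SA.gr (j - 1) ∧ SA.d y = x

/-- A (relative) Sullivan extension `(A, d) ↪ (Â = A ⊗ ΛV, d̂)`: an injective
CDGA morphism `inc : A → Â` together with a graded subspace `V ⊆ Â` of
generators such that `Â` is the free graded-commutative `A`-algebra on `V`
(expressed by the universal property), and `V` admits an exhaustive increasing
filtration `F 0 ⊆ F 1 ⊆ ⋯` with `d̂(F (k+1)) ⊆ A ⊗ ΛF k` and `d̂(F 0) ⊆ A`. -/
structure SullivanExtension {A Ahat : Type} [Ring A] [Algebra ℚ A]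
    [Ring Ahat] [Algebra ℚ Ahat]
    (SA : CDGAStruct A) (SH : CDGAStruct Ahat) : Type 1 where
  inc : A →ₗ[ℚ] Ahat
  hom : IsCDGAHom SA SH inc
  inj : Function.Injective inc
  V : ℕ → Submodule ℚ Ahat
  V_deg : ∀ i : ℕ, V i ≤ SH.gr i
  free : ∀ (B : Type) [Ring B] [Algebra ℚ B] (SB : CDGAStruct B) (g : A →ₗ[ℚ] B),
    g 1 = 1 → (∀ a a' : A, g (a * a') = g a * g a') →
    (∀ i : ℕ, ∀ a ∈ SA.gr i, g a ∈ SB.gr i) →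
    ∀ h : Ahat →ₗ[ℚ] B, (∀ i : ℕ, ∀ v ∈ V i, h v ∈ SB.gr i) →
    ∃! G : Ahat →ₗ[ℚ] B, G 1 = 1 ∧ (∀ x y : Ahat, G (x * y) = G x * G y) ∧
      (∀ i : ℕ, ∀ x ∈ SH.gr i, G x ∈ SB.gr i) ∧
      (∀ a : A, G (inc a) = g a) ∧ ∀ i : ℕ, ∀ v ∈ V i, G v = h v
  filt : ∃ F : ℕ → Submodule ℚ Ahat,
    (∀ k : ℕ, F k ≤ F (k + 1)) ∧ (∀ k : ℕ, F k ≤ ⨆ i, V i) ∧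
    ((⨆ i, V i) ≤ ⨆ k, F k) ∧
    (∀ v ∈ F 0, SH.d v ∈ Algebra.adjoin ℚ (Set.range inc)) ∧
    ∀ k : ℕ, ∀ v ∈ F (k + 1),
      SH.d v ∈ Algebra.adjoin ℚ (Set.range inc ∪ (F k : Set Ahat))

/-- A bundled CDGA over `ℚ`. -/
structure CDGA : Type 1 where
  carrier : Type
  [ring : Ring carrier]
  [alg : Algebra ℚ carrier]
  str : CDGAStruct carrier

attribute [instance] CDGA.ring CDGA.alg

/-- A bundled morphism of CDGAs. -/
structure CDGAMor : Type 1 where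
  src : CDGA
  tgt : CDGA
  map : src.carrier →ₗ[ℚ] tgt.carrier
  isHom : IsCDGAHom src.str tgt.str map

/-- One step of weak equivalence between CDGA morphisms: a commutative square
whose horizontal maps are quasi-isomorphisms of CDGAs. -/
def MorWeakEqStep (m m' : CDGAMor) : Prop :=
  ∃ (α : m.src.carrier →ₗ[ℚ] m'.src.carrier) (β : m.tgt.carrier →ₗ[ℚ] m'.tgt.carrier),
    IsCDGAHom m.src.str m'.src.str α ∧ IsQuasiIsoCDGA m.src.str m'.src.str α ∧
    IsCDGAHom m.tgt.str m'.tgt.str β ∧ IsQuasiIsoCDGA m.tgt.str m'.tgt.str β ∧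
    β ∘ₗ m.map = m'.map ∘ₗ α

/-- Two CDGA morphisms are weakly equivalent if they are connected by a finite
zigzag of commutative squares whose horizontal maps are quasi-isomorphisms. -/
def MorWeakEq : CDGAMor → CDGAMor → Prop := Relation.EqvGen MorWeakEqStep

/-- Two CDGAs are weakly equivalent if they are connected by a finite zigzag of
quasi-isomorphisms of CDGAs. -/
def CDGAWeakEq : CDGA → CDGA → Prop :=
  Relation.EqvGen fun X Y =>
    ∃ f : X.carrier →ₗ[ℚ] Y.carrier, IsCDGAHom X.str Y.str f ∧ IsQuasiIsoCDGA X.str Y.str f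

end

/-!
Because `θ` is an isomorphism of `P`-dg-modules, `φ^! = θ⁻¹ ∘ s^{-n}#φ` is a morphism of
`P`-dg-modules as soon as `s^{-n}#φ` is, and the transpose of a dg-module morphism is one because
the pairings are perfect in each degree. The transpose of the surjection `φ` is injective, so `φ^!`
identifies `s^{-n}#Q` with its image `I`, which is then a left ideal stable under `d`, and a
two-sided one by graded commutativity. Finally, for an injective chain map `f` with cokernel
`g : P → P/I`, the projection of the cone of `f` onto `P/I` is a quasi-isomorphism: a cocycle `g a`
lifts to the cone cocycle `(a, -f⁻¹(d a))`, and a cone cocycle `(a, m)` with `g a = d (g p)` is the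
boundary of `(p, f⁻¹(a - d p))`. It is multiplicative because the first component of the
semi-trivial product is the product of `P`.
-/

open DirectSum Function

namespace DirectSum

variable {ι R M N : Type*} [DecidableEq ι] [Ring R] [AddCommGroup M] [Module R M]
  [AddCommGroup N] [Module R N] {ℳ : ι → Submodule R M} {𝒩 : ι → Submodule R N}

theorem IsInternal.induction_on (h : IsInternal ℳ) {motive : M → Prop} (zero : motive 0)
    (mem : ∀ i, ∀ x ∈ ℳ i, motive x) (add : ∀ x y, motive x → motive y → motive (x + y))
    (x : M) : motive x :=
  Submodule.iSup_induction ℳ (motive := motive) (h.submodule_iSup_eq_top ▸ Submodule.mem_top)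
    mem zero add

theorem IsInternal.linearMap_ext {P : Type*} [AddCommGroup P] [Module R P]
    (h : IsInternal ℳ) {f g : M →ₗ[R] P} (hfg : ∀ i, ∀ x ∈ ℳ i, f x = g x) : f = g :=
  LinearMap.ext <| h.induction_on (by simp) hfg fun x y hx hy => by simp [hx, hy]

section Decomposition

variable [Decomposition ℳ] [Decomposition 𝒩]

theorem mem_of_decompose_eq_zero {x : M} {k : ι}
    (hx : ∀ i ≠ k, (decompose ℳ x i : M) = 0) : x ∈ ℳ k := by
  classical
  rw [← sum_support_decompose ℳ x]
  refine Submodule.sum_mem _ fun i _ => ?_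
  by_cases hik : i = k
  · exact hik ▸ (decompose ℳ x i).2
  · exact hx i hik ▸ zero_mem _

theorem apply_decompose_of_forall_ne (f : M →ₗ[R] N) {i : ι}
    (hf : ∀ j ≠ i, ∀ x ∈ ℳ j, f x = 0) (x : M) : f (decompose ℳ x i) = f x := by
  induction x using Decomposition.inductionOn ℳ with
  | zero => simp
  | @homogeneous j m =>
    by_cases hji : j = i
    · subst hji; rw [decompose_coe, of_eq_same]
    · rw [decompose_of_mem_ne ℳ m.2 hji, map_zero, hf j hji m m.2]
  | add x y hx hy => simp [hx, hy]

theorem map_decompose (f : M →ₗ[R] N) (hf : ∀ i, ∀ x ∈ ℳ i, f x ∈ 𝒩 i) (x : M) (i : ι) :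
    f (decompose ℳ x i) = decompose 𝒩 (f x) i := by
  induction x using Decomposition.inductionOn ℳ with
  | zero => simp
  | @homogeneous j m =>
    by_cases hji : j = i
    · subst hji; rw [decompose_coe, of_eq_same, decompose_of_mem_same 𝒩 (hf j m m.2)]
    · rw [decompose_of_mem_ne ℳ m.2 hji, decompose_of_mem_ne 𝒩 (hf j m m.2) hji, map_zero]
  | add x y hx hy => simp [hx, hy]

end Decomposition

theorem IsInternal.mem_of_map_mem (hℳ : IsInternal ℳ) (h𝒩 : IsInternal 𝒩) {f : M →ₗ[R] N}
    (hf : ∀ i, ∀ x ∈ ℳ i, f x ∈ 𝒩 i) (hinj : Injective f) {x : M} {k : ι}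
    (hx : f x ∈ 𝒩 k) : x ∈ ℳ k := by
  let := hℳ.chooseDecomposition
  let := h𝒩.chooseDecomposition
  refine mem_of_decompose_eq_zero fun i hik => hinj ?_
  rw [map_decompose f hf, decompose_of_mem_ne 𝒩 hx (Ne.symm hik), map_zero]

theorem IsInternal.exists_mem_map_eq (hℳ : IsInternal ℳ) (h𝒩 : IsInternal 𝒩) {f : M →ₗ[R] N}
    (hf : ∀ i, ∀ x ∈ ℳ i, f x ∈ 𝒩 i) (hsurj : Surjective f) {y : N} {k : ι}
    (hy : y ∈ 𝒩 k) : ∃ x ∈ ℳ k, f x = y := by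
  let := hℳ.chooseDecomposition
  let := h𝒩.chooseDecomposition
  obtain ⟨x, rfl⟩ := hsurj y
  exact ⟨decompose ℳ x k, (decompose ℳ x k).2,
    by rw [map_decompose f hf, decompose_of_mem_same 𝒩 hy]⟩

end DirectSum

namespace CDGAStruct

variable {A : Type} [Ring A] [Algebra ℚ A] (SA : CDGAStruct A)

@[simp]
theorem grZ_natCast (i : ℕ) : SA.grZ i = SA.gr i := by
  simp [grZ]

theorem grZ_of_neg {j : ℤ} (hj : j < 0) : SA.grZ j = ⊥ := by
  simp [grZ, not_le.mpr hj]

theorem mem_grZ_iff {j : ℤ} {a : A} :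
    a ∈ SA.grZ j ↔ (∃ i : ℕ, j = i ∧ a ∈ SA.gr i) ∨ (j < 0 ∧ a = 0) := by
  rcases lt_or_ge j 0 with hj | hj
  · simp only [SA.grZ_of_neg hj, Submodule.mem_bot, hj, true_and]
    refine ⟨Or.inr, ?_⟩
    rintro (⟨i, rfl, -⟩ | h)
    · omega
    · exact h
  · obtain ⟨i, rfl⟩ := Int.eq_ofNat_of_zero_le hj
    simp

theorem isInternal_grZ : IsInternal SA.grZ := by
  refine (isInternal_submodule_iff_iSupIndep_and_iSup_eq_top _).mpr ⟨fun j => ?_, ?_⟩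
  · rcases lt_or_ge j 0 with hj | hj
    · simp [SA.grZ_of_neg hj]
    obtain ⟨i, rfl⟩ := Int.eq_ofNat_of_zero_le hj
    refine (SA.internal.submodule_iSupIndep i).mono (SA.grZ_natCast i).le
      (iSup₂_le fun k hk => ?_)
    rcases lt_or_ge k 0 with hk' | hk'
    · simp [SA.grZ_of_neg hk']
    obtain ⟨l, rfl⟩ := Int.eq_ofNat_of_zero_le hk'
    exact (SA.grZ_natCast l).le.trans (le_iSup₂_of_le l (by exact_mod_cast hk) le_rfl)
  · refine eq_top_iff.mpr (SA.internal.submodule_iSup_eq_top ▸ iSup_le fun i => ?_)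
    exact le_iSup_of_le (i : ℤ) (SA.grZ_natCast i).ge

theorem d_mem_grZ {j : ℤ} {a : A} (ha : a ∈ SA.grZ j) : SA.d a ∈ SA.grZ (j + 1) := by
  obtain ⟨i, rfl, ha⟩ | ⟨-, rfl⟩ := SA.mem_grZ_iff.mp ha
  · exact_mod_cast SA.d_mem ha
  · simp

end CDGAStruct

namespace IsCDGAHom

variable {A B : Type} [Ring A] [Algebra ℚ A] [Ring B] [Algebra ℚ B]
  {SA : CDGAStruct A} {SB : CDGAStruct B} {f : A →ₗ[ℚ] B}

theorem map_mem_grZ (hf : IsCDGAHom SA SB f) {j : ℤ} {a : A} (ha : a ∈ SA.grZ j) :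
    f a ∈ SB.grZ j := by
  obtain ⟨i, rfl, ha⟩ | ⟨-, rfl⟩ := SA.mem_grZ_iff.mp ha
  · simpa using hf.2.2.1 i a ha
  · simp

theorem exists_mem_grZ_eq (hf : IsCDGAHom SA SB f) (hsurj : Surjective f) {j : ℤ} {b : B}
    (hb : b ∈ SB.grZ j) : ∃ a ∈ SA.grZ j, f a = b :=
  SA.isInternal_grZ.exists_mem_map_eq SB.isInternal_grZ (fun _ _ => hf.map_mem_grZ) hsurj hb

theorem isDGModHom_of_isModViaHom (hf : IsCDGAHom SA SB f) {SAm : DGModStruct SA A}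
    (hA : IsSelfMod SA SAm) {SBm : DGModStruct SB B} (hB : IsSelfMod SB SBm)
    {SBA : DGModStruct SA B} (hBA : IsModViaHom SA SB f SBm SBA) : IsDGModHom SAm SBA f := by
  refine ⟨fun j a ha => ?_, fun a a' => ?_, fun a => ?_⟩
  · rw [hBA.1, hB.1]
    exact hf.map_mem_grZ (hA.1 j ▸ ha)
  · rw [hA.2.1, hBA.2.1, hB.2.1, hf.2.1]
  · rw [hA.2.2, hBA.2.2, hB.2.2, hf.2.2.2]

end IsCDGAHom

namespace DualRep

variable {A M D : Type} [Ring A] [Algebra ℚ A] {SA : CDGAStruct A}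
  [AddCommGroup M] [Module ℚ M] {SM : DGModStruct SA M} {n : ℤ}
  [AddCommGroup D] [Module ℚ D] {SD : DGModStruct SA D} (dual : DualRep SA SM n SD)

theorem decompose_eq_zero_of_pair [Decomposition SD.gr] {f : D} {k : ℤ}
    (hf : ∀ y ∈ SM.gr (n - k), dual.pair f y = 0) : (decompose SD.gr f k : D) = 0 := by
  refine dual.nondeg _ (decompose SD.gr f k).2 fun y hy => ?_
  rw [← hf y hy]
  exact apply_decompose_of_forall_ne (dual.pair.flip y)
    (fun j hj x hx => dual.pair_deg hx hy (by omega)) f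

theorem mem_gr_of_pair_eq_zero {f : D} {k : ℤ}
    (hf : ∀ j ≠ k, ∀ y ∈ SM.gr (n - j), dual.pair f y = 0) : f ∈ SD.gr k := by
  let := SD.internal.chooseDecomposition
  exact mem_of_decompose_eq_zero fun j hj => dual.decompose_eq_zero_of_pair (hf j hj)

theorem eq_zero_of_pair_eq_zero {f : D} (hf : ∀ y, dual.pair f y = 0) : f = 0 := by
  let := SD.internal.chooseDecomposition
  refine (decompose SD.gr).injective ?_
  rw [decompose_zero]
  exact DFinsupp.ext fun k => Subtype.ext (dual.decompose_eq_zero_of_pair fun y _ => hf y)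

theorem ext_pair {f g : D} (h : ∀ y, dual.pair f y = dual.pair g y) : f = g :=
  sub_eq_zero.mp (dual.eq_zero_of_pair_eq_zero fun y => by simp [h])

variable {N E : Type} [AddCommGroup N] [Module ℚ N] {SN : DGModStruct SA N}
  [AddCommGroup E] [Module ℚ E] {SE : DGModStruct SA E}

/-- `ψ` is the map `s^{-n}#φ : s^{-n}#N → s^{-n}#M`. -/
def IsTranspose (dualM : DualRep SA SM n SD) (dualN : DualRep SA SN n SE)
    (φ : M →ₗ[ℚ] N) (ψ : E →ₗ[ℚ] D) : Prop :=
  ∀ x y, dualM.pair (ψ x) y = dualN.pair x (φ y)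

namespace IsTranspose

variable {dualM : DualRep SA SM n SD} {dualN : DualRep SA SN n SE}
  {φ : M →ₗ[ℚ] N} {ψ : E →ₗ[ℚ] D}

theorem injective (hψ : IsTranspose dualM dualN φ ψ) (hφ : Surjective φ) : Injective ψ := by
  refine (injective_iff_map_eq_zero ψ).mpr fun x hx =>
    dualN.eq_zero_of_pair_eq_zero fun y => ?_
  obtain ⟨y, rfl⟩ := hφ y
  rw [← hψ, hx, map_zero, LinearMap.zero_apply]

theorem isDGModHom (hψ : IsTranspose dualM dualN φ ψ) (hφ : IsDGModHom SM SN φ) :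
    IsDGModHom SE SD ψ := by
  have hgr : ∀ k, ∀ x ∈ SE.gr k, ψ x ∈ SD.gr k := fun k x hx =>
    dualM.mem_gr_of_pair_eq_zero fun j hj y hy => by
      rw [hψ]; exact dualN.pair_deg hx (hφ.1 _ y hy) (by omega)
  refine ⟨hgr, fun a x => ?_, fun x => ?_⟩
  · refine SA.internal.induction_on (motive := fun a => ψ (SE.smul a x) = SD.smul a (ψ x))
      (by simp) (fun i a ha => ?_) (fun a b ha hb => by simp [ha, hb]) a
    refine LinearMap.congr_fun (SE.internal.linearMap_ext (f := ψ ∘ₗ SE.smul a)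
      (g := SD.smul a ∘ₗ ψ) fun k x hx => dualM.ext_pair fun y => ?_) x
    simp only [LinearMap.comp_apply]
    rw [hψ, dualM.smul_pair a _ y ha (hgr k x hx), hψ, dualN.smul_pair a x _ ha hx, hφ.2.1]
  · refine LinearMap.congr_fun (SE.internal.linearMap_ext (f := ψ ∘ₗ SE.d)
      (g := SD.d ∘ₗ ψ) fun k x hx => dualM.ext_pair fun y => ?_) x
    simp only [LinearMap.comp_apply]
    rw [hψ, dualM.d_pair _ y (hgr k x hx), hψ, dualN.d_pair x _ hx, hφ.2.2]

end IsTranspose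

end DualRep

namespace IsDGModHom

variable {A M N L : Type} [Ring A] [Algebra ℚ A] {SA : CDGAStruct A}
  [AddCommGroup M] [Module ℚ M] [AddCommGroup N] [Module ℚ N] [AddCommGroup L] [Module ℚ L]
  {SM : DGModStruct SA M} {SN : DGModStruct SA N} {SL : DGModStruct SA L}

theorem of_comp_injective {θ : N →ₗ[ℚ] L} {f : M →ₗ[ℚ] N} (hθ : IsDGModHom SN SL θ)
    (hθinj : Injective θ) (hθf : IsDGModHom SM SL (θ ∘ₗ f)) : IsDGModHom SM SN f := by
  refine ⟨fun j m hm => SN.internal.mem_of_map_mem SL.internal hθ.1 hθinj (hθf.1 j m hm),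
    fun a m => hθinj ?_, fun m => hθinj ?_⟩
  · rw [hθ.2.1, ← LinearMap.comp_apply, hθf.2.1, LinearMap.comp_apply]
  · rw [hθ.2.2, ← LinearMap.comp_apply, hθf.2.2, LinearMap.comp_apply]

theorem isDGHomToAlg {SAm : DGModStruct SA A} (hA : IsSelfMod SA SAm) {f : M →ₗ[ℚ] A}
    (hf : IsDGModHom SM SAm f) : IsDGHomToAlg SA SM f :=
  ⟨fun j m hm => hA.1 j ▸ hf.1 j m hm, fun a m => by rw [hf.2.1, hA.2.1],
    fun m => by rw [hf.2.2, hA.2.2]⟩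

end IsDGModHom

section Cone

variable {A M B : Type} [Ring A] [Algebra ℚ A] [AddCommGroup M] [Module ℚ M]
  [Ring B] [Algebra ℚ B] {SA : CDGAStruct A} {SM : DGModStruct SA M}

def IsDifferentialIdeal (SA : CDGAStruct A) (I : Submodule ℚ A) : Prop :=
  ∀ x ∈ I, SA.d x ∈ I ∧ ∀ a : A, a * x ∈ I ∧ x * a ∈ I

@[simp]
theorem coneD_apply (f : M →ₗ[ℚ] A) (a : A) (m : M) :
    coneD SA SM f (a, m) = (SA.d a + f m, -SM.d m) :=
  rfl

namespace IsDGHomToAlg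

variable {f : M →ₗ[ℚ] A}

theorem mem_gr_of_map_mem (hf : IsDGHomToAlg SA SM f) (hinj : Injective f) {j : ℤ} {m : M}
    (hm : f m ∈ SA.grZ j) : m ∈ SM.gr j :=
  SM.internal.mem_of_map_mem SA.isInternal_grZ hf.1 hinj hm

theorem isDifferentialIdeal_range (hf : IsDGHomToAlg SA SM f) :
    IsDifferentialIdeal SA (LinearMap.range f) := by
  have hleft : ∀ (a : A) (m : M), a * f m ∈ LinearMap.range f := fun a m =>
    ⟨SM.smul a m, hf.2.1 a m⟩
  rintro _ ⟨m, rfl⟩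
  refine ⟨⟨SM.d m, hf.2.2 m⟩, fun a => ⟨hleft a m, ?_⟩⟩
  refine SM.internal.induction_on (motive := fun m => f m * a ∈ LinearMap.range f)
    (by simp) (fun k m hm => ?_) (fun m m' h h' => by simpa [add_mul] using add_mem h h') m
  refine SA.internal.induction_on (motive := fun a => f m * a ∈ LinearMap.range f)
    (by simp) (fun i a ha => ?_) (fun a a' h h' => by simpa [mul_add] using add_mem h h') a
  obtain ⟨l, -, hfm⟩ | ⟨-, hfm⟩ := SA.mem_grZ_iff.mp (hf.1 k m hm)
  · rw [SA.gcomm hfm ha]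
    exact Submodule.smul_mem _ _ (hleft a m)
  · simp [hfm]

end IsDGHomToAlg

theorem SemiTrivialMul.fst_apply {μ : A × M →ₗ[ℚ] A × M →ₗ[ℚ] A × M}
    (hμ : SemiTrivialMul SA SM μ) (x y : A × M) : (μ x y).1 = x.1 * y.1 := by
  have hleft : (μ.compl₁₂ (LinearMap.inl ℚ A M) (LinearMap.inr ℚ A M)).compr₂
      (LinearMap.fst ℚ A M) = 0 :=
    SA.internal.linearMap_ext fun i a ha => LinearMap.ext fun m => by simp [hμ.2.1 i a m ha]
  have hright : (μ.compl₁₂ (LinearMap.inr ℚ A M) (LinearMap.inl ℚ A M)).compr₂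
      (LinearMap.fst ℚ A M) = 0 :=
    SM.internal.linearMap_ext fun j m hm => SA.internal.linearMap_ext fun i a ha => by
      simp [hμ.2.2.1 i j a m ha hm]
  obtain ⟨a, m⟩ := x
  obtain ⟨b, m'⟩ := y
  have hl := LinearMap.congr_fun₂ hleft a m'
  have hr := LinearMap.congr_fun₂ hright m b
  simp only [LinearMap.compr₂_apply, LinearMap.compl₁₂_apply, LinearMap.inl_apply,
    LinearMap.inr_apply, LinearMap.fst_apply, LinearMap.zero_apply] at hl hr
  have split : ∀ (a : A) (m : M), ((a, m) : A × M) = (a, 0) + (0, m) := by simp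
  rw [split a m, split b m']
  simp only [map_add, LinearMap.add_apply, Prod.fst_add, hμ.1, hμ.2.2.2, hl, hr,
    add_zero]

variable {SB : CDGAStruct B} {f : M →ₗ[ℚ] A} {g : A →ₗ[ℚ] B}

theorem IsCDGAHom.isGradedDGAHom_comp_fst (hg : IsCDGAHom SA SB g) (hgf : g ∘ₗ f = 0)
    {μ : A × M →ₗ[ℚ] A × M →ₗ[ℚ] A × M} (hμ : SemiTrivialMul SA SM μ) :
    IsGradedDGAHom (coneGr SA SM) ((1 : A), (0 : M)) μ (coneD SA SM f)
      SB.grZ 1 (LinearMap.mul ℚ B) SB.d (g ∘ₗ LinearMap.fst ℚ A M) := by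
  refine ⟨by simpa using hg.1, fun x y => ?_, fun j x hx => hg.map_mem_grZ hx.1, ?_⟩
  · simp [hμ.fst_apply, hg.2.1]
  · rintro ⟨a, m⟩
    simp [hg.2.2.2, ← LinearMap.comp_apply g f, hgf]

theorem exists_cocycle_cone_of_ker_eq_range (hf : IsDGHomToAlg SA SM f) (hfinj : Injective f)
    (hg : IsCDGAHom SA SB g) (hgsurj : Surjective g) (hker : LinearMap.ker g = LinearMap.range f)
    {j : ℤ} {y : B} (hy : IsCocycle SB.grZ SB.d j y) :
    ∃ x, IsCocycle (coneGr SA SM) (coneD SA SM f) j x ∧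
      IsCoboundary SB.grZ SB.d j ((g ∘ₗ LinearMap.fst ℚ A M) x - y) := by
  obtain ⟨a, ha, rfl⟩ := hg.exists_mem_grZ_eq hgsurj hy.1
  obtain ⟨w, hw⟩ : SA.d a ∈ LinearMap.range f := by
    rw [← hker, LinearMap.mem_ker, hg.2.2.2, hy.2]
  have hw_gr : w ∈ SM.gr (j + 1) := hf.mem_gr_of_map_mem hfinj (hw ▸ SA.d_mem_grZ ha)
  have hw_d : SM.d w = 0 := hfinj (by rw [hf.2.2, hw, SA.d_sq, map_zero])
  refine ⟨(a, -w), ⟨⟨ha, neg_mem hw_gr⟩, by simp [hw, hw_d]⟩, 0, zero_mem _, by simp⟩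

theorem isCoboundary_cone_of_ker_eq_range (hf : IsDGHomToAlg SA SM f) (hfinj : Injective f)
    (hg : IsCDGAHom SA SB g) (hgsurj : Surjective g) (hker : LinearMap.ker g = LinearMap.range f)
    {j : ℤ} {x : A × M} (hx : IsCocycle (coneGr SA SM) (coneD SA SM f) j x)
    (hgx : IsCoboundary SB.grZ SB.d j ((g ∘ₗ LinearMap.fst ℚ A M) x)) :
    IsCoboundary (coneGr SA SM) (coneD SA SM f) j x := by
  obtain ⟨a, m⟩ := x
  obtain ⟨⟨ha, -⟩, hdx⟩ := hx
  obtain ⟨r, hr, hdr⟩ := hgx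
  obtain ⟨p, hp, rfl⟩ := hg.exists_mem_grZ_eq hgsurj hr
  simp only [coneD_apply, Prod.mk_eq_zero, neg_eq_zero] at hdx
  obtain ⟨v, hv⟩ : a - SA.d p ∈ LinearMap.range f := by
    rw [← hker, LinearMap.mem_ker, map_sub, hg.2.2.2, hdr]
    simp
  have hdp : SA.d p ∈ SA.grZ j := by simpa using SA.d_mem_grZ hp
  have hv_gr : v ∈ SM.gr j := hf.mem_gr_of_map_mem hfinj (hv ▸ sub_mem ha hdp)
  have hv_d : SM.d v = -m := hfinj <| by
    rw [hf.2.2, hv, map_sub, SA.d_sq, sub_zero, map_neg]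
    exact eq_neg_of_add_eq_zero_left hdx.1
  exact ⟨(p, v), ⟨hp, by simpa using hv_gr⟩, by simp [hv, hv_d]⟩

theorem isQuasiIsoGr_cone_of_ker_eq_range (hf : IsDGHomToAlg SA SM f) (hfinj : Injective f)
    (hg : IsCDGAHom SA SB g) (hgsurj : Surjective g) (hker : LinearMap.ker g = LinearMap.range f) :
    IsQuasiIsoGr (coneGr SA SM) (coneD SA SM f) SB.grZ SB.d (g ∘ₗ LinearMap.fst ℚ A M) :=
  fun _ => ⟨fun _ hy => exists_cocycle_cone_of_ker_eq_range hf hfinj hg hgsurj hker hy,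
    fun _ hx hgx => isCoboundary_cone_of_ker_eq_range hf hfinj hg hgsurj hker hx hgx⟩

end Cone

theorem statement5_general {P Q D DQ R : Type}
    [Ring P] [Algebra ℚ P] [Ring Q] [Algebra ℚ Q] [Ring R] [Algebra ℚ R]
    [AddCommGroup D] [Module ℚ D] [AddCommGroup DQ] [Module ℚ DQ]
    (SP : CDGAStruct P) (SQ : CDGAStruct Q) (n : ℕ)
    (SPm : DGModStruct SP P) (hself : IsSelfMod SP SPm)
    (SD : DGModStruct SP D) (dualP : DualRep SP SPm (n : ℤ) SD)
    (θ : P →ₗ[ℚ] D) (hθ : IsDGModHom SPm SD θ) (hθbij : Function.Bijective θ)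
    (φ : P →ₗ[ℚ] Q) (hφ : IsCDGAHom SP SQ φ) (hφsurj : Function.Surjective φ)
    (SQself : DGModStruct SQ Q) (hQself : IsSelfMod SQ SQself)
    (SQP : DGModStruct SP Q) (hQP : IsModViaHom SP SQ φ SQself SQP)
    (SDQ : DGModStruct SP DQ) (dualQ : DualRep SP SQP (n : ℤ) SDQ)
    (ψ : DQ →ₗ[ℚ] D)
    (hψ : ∀ (x : DQ) (p : P), dualP.pair (ψ x) p = dualQ.pair x (φ p))
    (sh : DQ →ₗ[ℚ] P) (hsh : θ ∘ₗ sh = ψ)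
    (μP : P × DQ →ₗ[ℚ] P × DQ →ₗ[ℚ] P × DQ) (hμP : SemiTrivialMul SP SDQ μP)
    -- a presentation of the quotient CDGA `P/I`, `I = φ^!(s^{-n}#Q)`
    (SR : CDGAStruct R) (proj : P →ₗ[ℚ] R) (hproj : IsCDGAHom SP SR proj)
    (hprojsurj : Function.Surjective proj)
    (hker : LinearMap.ker proj = LinearMap.range sh) :
    Function.Injective sh ∧
    (∀ x ∈ LinearMap.range sh, SP.d x ∈ LinearMap.range sh ∧
      ∀ p : P, p * x ∈ LinearMap.range sh ∧ x * p ∈ LinearMap.range sh) ∧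
    IsGradedDGAHom (coneGr SP SDQ) ((1 : P), (0 : DQ)) μP (coneD SP SDQ sh)
      SR.grZ 1 (LinearMap.mul ℚ R) SR.d (proj ∘ₗ LinearMap.fst ℚ P DQ) ∧
    IsQuasiIsoGr (coneGr SP SDQ) (coneD SP SDQ sh) SR.grZ SR.d
      (proj ∘ₗ LinearMap.fst ℚ P DQ) := by
  have hψ' : dualP.IsTranspose dualQ φ ψ := hψ
  have hψmod : IsDGModHom SDQ SD ψ :=
    hψ'.isDGModHom (hφ.isDGModHom_of_isModViaHom hself hQself hQP)
  have hshmod : IsDGModHom SDQ SPm sh := hθ.of_comp_injective hθbij.injective (hsh ▸ hψmod)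
  have hshalg : IsDGHomToAlg SP SDQ sh := hshmod.isDGHomToAlg hself
  have hshinj : Function.Injective sh :=
    .of_comp (f := θ) (by rw [← LinearMap.coe_comp, hsh]; exact hψ'.injective hφsurj)
  have hproj_sh : proj ∘ₗ sh = 0 :=
    LinearMap.ext fun u => (hker ▸ LinearMap.mem_range_self sh u : sh u ∈ LinearMap.ker proj)
  exact ⟨hshinj, hshalg.isDifferentialIdeal_range, hproj.isGradedDGAHom_comp_fst hproj_sh hμP,
    isQuasiIsoGr_cone_of_ker_eq_range hshalg hshinj hproj hprojsurj hker⟩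

/-- Let `φ : P → Q` be a surjective morphism of connected
CDGAs with `P` a Poincaré duality CDGA in dimension `n`, `Q` of finite type,
and let `φ^! := θ_P⁻¹ ∘ (s^{-n}#φ) : s^{-n}#Q → P`; assume `φ ∘ φ^!` is
balanced. Then: (1) `φ^!` is injective; (2) `I := φ^!(s^{-n}#Q)` is a
differential ideal of `P`; and (3) the projection
`π = (proj, 0) : P ⊕_{φ^!} ss^{-n}#Q → P/I` is a quasi-isomorphism of CDGAs,
where the mapping cone carries the semi-trivial CDGA structure. (The quotient
`P/I` is presented by any surjective CDGA morphism `proj : P → R` with kernel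
`I`.) -/
theorem statement5 {P Q D DQ R : Type}
    [Ring P] [Algebra ℚ P] [Ring Q] [Algebra ℚ Q] [Ring R] [Algebra ℚ R]
    [AddCommGroup D] [Module ℚ D] [AddCommGroup DQ] [Module ℚ DQ]
    (SP : CDGAStruct P) (SQ : CDGAStruct Q) (n : ℕ)
    (hPconn : SP.Connected) (hPft : SP.FiniteType) (hQconn : SQ.Connected)
    (hQft : SQ.FiniteType)
    (SPm : DGModStruct SP P) (hself : IsSelfMod SP SPm)
    (SD : DGModStruct SP D) (dualP : DualRep SP SPm (n : ℤ) SD)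
    (θ : P →ₗ[ℚ] D) (hθ : IsDGModHom SPm SD θ) (hθbij : Function.Bijective θ)
    (φ : P →ₗ[ℚ] Q) (hφ : IsCDGAHom SP SQ φ) (hφsurj : Function.Surjective φ)
    (SQself : DGModStruct SQ Q) (hQself : IsSelfMod SQ SQself)
    (SQP : DGModStruct SP Q) (hQP : IsModViaHom SP SQ φ SQself SQP)
    (SDQ : DGModStruct SP DQ) (dualQ : DualRep SP SQP (n : ℤ) SDQ)
    (ψ : DQ →ₗ[ℚ] D)
    (hψ : ∀ (x : DQ) (p : P), dualP.pair (ψ x) p = dualQ.pair x (φ p))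
    (sh : DQ →ₗ[ℚ] P) (hsh : θ ∘ₗ sh = ψ)
    (SDQQ : DGModStruct SQ DQ) (hDQQ : IsModViaHom SP SQ φ SDQQ SDQ)
    (hbal : IsBalanced SQ SDQQ (φ ∘ₗ sh))
    (μP : P × DQ →ₗ[ℚ] P × DQ →ₗ[ℚ] P × DQ) (hμP : SemiTrivialMul SP SDQ μP)
    -- a presentation of the quotient CDGA `P/I`, `I = φ^!(s^{-n}#Q)`
    (SR : CDGAStruct R) (proj : P →ₗ[ℚ] R) (hproj : IsCDGAHom SP SR proj)
    (hprojsurj : Function.Surjective proj)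
    (hker : LinearMap.ker proj = LinearMap.range sh) :
    Function.Injective sh ∧
    (∀ x ∈ LinearMap.range sh, SP.d x ∈ LinearMap.range sh ∧
      ∀ p : P, p * x ∈ LinearMap.range sh ∧ x * p ∈ LinearMap.range sh) ∧
    IsGradedDGAHom (coneGr SP SDQ) ((1 : P), (0 : DQ)) μP (coneD SP SDQ sh)
      SR.grZ 1 (LinearMap.mul ℚ R) SR.d (proj ∘ₗ LinearMap.fst ℚ P DQ) ∧
    IsQuasiIsoGr (coneGr SP SDQ) (coneD SP SDQ sh) SR.grZ SR.d
      (proj ∘ₗ LinearMap.fst ℚ P DQ) :=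
  statement5_general SP SQ n SPm hself SD dualP θ hθ hθbij φ hφ hφsurj SQself hQself SQP hQP SDQ
    dualQ ψ hψ sh hsh μP hμP SR proj hproj hprojsurj hker
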